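/- Let n ≥ 1, let C = {x ∈ ℝⁿ : x_1 ≤ x_2 ≤ ⋯ ≤ x_n ≤ x_1 + 1}, and define T : ℝⁿ → ℝⁿ by T(x_1, x_2, …, x_n) = (x_2, …, x_n, x_1 + 1). Then: (1) T is a surjective isometry of ℝⁿ (with the Euclidean metric); (2) T(C) = C; (3) the cyclic group generated by T acts freely on ℝⁿ, i.e. T^k(x) = x for some x ∈ ℝⁿ implies k = 0; and (4) for every x ∈ C there exists k ∈ ℤ with T^k(x) ∈ Δ, where Δ = {x ∈ ℝⁿ : 0 ≤ x_1 ≤ ⋯ ≤ x_n ≤ 1} is the standard n-dimensional orthoscheme. -/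

import Mathlib

/-- The translation-rotation `T(x₁, …, xₙ) = (x₂, …, xₙ, x₁ + 1)` of Euclidean `n`-space. -/
noncomputable def Tmap (n : ℕ) :
    EuclideanSpace ℝ (Fin n) → EuclideanSpace ℝ (Fin n) := fun x => WithLp.toLp 2 fun i =>
  if h : (i : ℕ) + 1 < n then x ⟨(i : ℕ) + 1, h⟩ else x ⟨0, i.pos⟩ + 1

/-- The inverse translation-rotation `T⁻¹(x₁, …, xₙ) = (xₙ − 1, x₁, …, x_{n−1})`. -/
noncomputable def Tinv (n : ℕ) :
    EuclideanSpace ℝ (Fin n) → EuclideanSpace ℝ (Fin n) := fun x => WithLp.toLp 2 fun i =>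
  if (i : ℕ) = 0 then x ⟨n - 1, by have := i.pos; omega⟩ - 1
  else x ⟨(i : ℕ) - 1, by have := i.isLt; omega⟩

/-- The column `C = {x ∈ ℝⁿ : x₁ ≤ x₂ ≤ ⋯ ≤ xₙ ≤ x₁ + 1}` (equivalently: `x` is monotone
and `x i ≤ x j + 1` for all `i, j`). -/
def ColumnSet (n : ℕ) : Set (EuclideanSpace ℝ (Fin n)) :=
  {x | (∀ i j : Fin n, i ≤ j → x i ≤ x j) ∧ ∀ i j : Fin n, x i ≤ x j + 1}

/-- The standard `n`-dimensional orthoscheme `Δ = {x ∈ ℝⁿ : 0 ≤ x₁ ≤ ⋯ ≤ xₙ ≤ 1}`. -/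
def DeltaSet (n : ℕ) : Set (EuclideanSpace ℝ (Fin n)) :=
  {x | (∀ i j : Fin n, i ≤ j → x i ≤ x j) ∧ ∀ i : Fin n, 0 ≤ x i ∧ x i ≤ 1}

/-!
Write `x ∈ ℝⁿ` as the window `(f 0, …, f (n - 1))` of the sequence `f : ℤ → ℝ` given by
`f (i + n q) = xᵢ + q`, which satisfies `f (m + n) = f m + 1`. Then `T` and `T⁻¹` shift the window
by one step, so `T^k x` is the window of `f` at `k`. The coordinate sum of a window grows by one
per step, so `⟨T⟩` acts freely; the difference of two such sequences is `n`-periodic, so `T` is an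
isometry. Finally `x ∈ C` iff `f` is monotone, which makes `C` invariant, and for monotone `f` the
window at the least `s` with `0 ≤ f s` lies in `Δ`: its last entry is `f (s - 1) + 1 ≤ 1`.
-/

section Window

variable {n : ℕ} {f : ℤ → ℝ}

def window (n : ℕ) (f : ℤ → ℝ) (s : ℤ) : EuclideanSpace ℝ (Fin n) :=
  WithLp.toLp 2 fun i => f (i + s)

@[simp]
lemma window_apply (s : ℤ) (i : Fin n) : window n f s i = f (i + s) := rfl

lemma sum_shift_succ (g : ℤ → ℝ) (s : ℤ) :
    ∑ i : Fin n, g (i + (s + 1)) = ∑ i : Fin n, g (i + s) + (g (s + n) - g s) := by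
  have h₁ := Finset.sum_range_succ' (fun i : ℕ => g (i + s)) n
  have h₂ := Finset.sum_range_succ (fun i : ℕ => g (i + s)) n
  rw [Fin.sum_univ_eq_sum_range (fun i : ℕ => g (i + (s + 1))),
    Fin.sum_univ_eq_sum_range (fun i : ℕ => g (i + s))]
  push_cast at h₁ h₂
  simp only [zero_add, add_assoc, add_comm (1 : ℤ) s, add_comm (n : ℤ) s] at h₁ h₂
  linarith

variable (hf : ∀ m, f (m + n) = f m + 1)
include hf

lemma apply_add_mul_period (m q : ℤ) : f (m + n * q) = f m + q := by
  induction q using Int.induction_on with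
  | zero => simp
  | succ q ih => rw [mul_add, mul_one, ← add_assoc, hf, ih]; push_cast; ring
  | pred q ih =>
    have := hf (m + n * (-q - 1))
    rw [add_assoc, ← mul_add_one, sub_add_cancel, ih] at this
    push_cast at this ⊢
    linarith

lemma tmap_window (s : ℤ) : Tmap n (window n f s) = window n f (s + 1) := by
  ext i
  simp only [Tmap, PiLp.toLp_apply, window_apply]
  split_ifs with h
  · push_cast; ring_nf
  · rw [← hf]; congr 1; push_cast; omega

lemma tinv_window (s : ℤ) : Tinv n (window n f s) = window n f (s - 1) := by
  ext i
  simp only [Tinv, PiLp.toLp_apply, window_apply]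
  split_ifs with h
  · rw [sub_eq_iff_eq_add, ← hf]
    congr 1
    push_cast [Nat.cast_sub (by omega : 1 ≤ n)]
    omega
  · congr 1; push_cast [Nat.cast_sub (by omega : 1 ≤ (i : ℕ))]; ring

lemma tmap_iterate_window (s : ℤ) (k : ℕ) :
    (Tmap n)^[k] (window n f s) = window n f (s + k) := by
  induction k with
  | zero => simp
  | succ k ih => rw [Function.iterate_succ_apply', ih, tmap_window hf]; push_cast; ring_nf

lemma tinv_iterate_window (s : ℤ) (k : ℕ) :
    (Tinv n)^[k] (window n f s) = window n f (s - k) := by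
  induction k with
  | zero => simp
  | succ k ih => rw [Function.iterate_succ_apply', ih, tinv_window hf]; push_cast; ring_nf

lemma sum_window_add (s t : ℤ) : ∑ i, window n f (s + t) i = ∑ i, window n f s i + t := by
  simp only [window_apply]
  induction t using Int.induction_on with
  | zero => simp
  | succ t ih => rw [← add_assoc, sum_shift_succ, ih, hf]; push_cast; ring
  | pred t ih =>
    have h := sum_shift_succ (n := n) f (s + (-t - 1))
    rw [add_assoc s, sub_add_cancel, ih, hf] at h
    push_cast at h ⊢
    linarith

lemma window_injective : Function.Injective (window n f) := by
  intro s t h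
  have := sum_window_add hf s (t - s)
  rw [add_sub_cancel, h, left_eq_add] at this
  exact (sub_eq_zero.mp (by exact_mod_cast this)).symm

lemma dist_window_succ {g : ℤ → ℝ} (hg : ∀ m, g (m + n) = g m + 1) (s : ℤ) :
    dist (window n f (s + 1)) (window n g (s + 1)) = dist (window n f s) (window n g s) := by
  simp only [EuclideanSpace.dist_eq, window_apply]
  rw [sum_shift_succ (fun m => dist (f m) (g m) ^ 2), hf, hg, dist_add_right, sub_self, add_zero]

variable (hmono : Monotone f)
include hmono

lemma window_mem_columnSet (s : ℤ) : window n f s ∈ ColumnSet n := by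
  refine ⟨fun i j hij => hmono ?_, fun i j => ?_⟩
  · simpa using hij
  · calc f (i + s) ≤ f (j + s + n) := hmono (by omega)
      _ = f (j + s) + 1 := hf _

lemma window_mem_deltaSet {s : ℤ} (h₁ : f (s - 1) ≤ 0) (h₀ : 0 ≤ f s) :
    window n f s ∈ DeltaSet n := by
  refine ⟨(window_mem_columnSet hf hmono s).1, fun i => ⟨h₀.trans (hmono (by omega)), ?_⟩⟩
  calc f (i + s) ≤ f (s - 1 + n) := hmono (by omega)
    _ ≤ 1 := by rw [hf]; linarith

lemma exists_window_mem_deltaSet : ∃ s, window n f s ∈ DeltaSet n := by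
  have bdd : ∀ z, 0 ≤ f z → n * -(⌊f 0⌋ + 1) ≤ z := by
    intro z hz
    by_contra! hlt
    have := hmono hlt.le
    rw [← zero_add (n * _ : ℤ), apply_add_mul_period hf] at this
    push_cast at this
    linarith [Int.lt_floor_add_one (f 0)]
  have nonempty : 0 ≤ f (n * ⌈-f 0⌉) := by
    rw [← zero_add (n * _ : ℤ), apply_add_mul_period hf]
    linarith [Int.le_ceil (-f 0)]
  obtain ⟨s, hs, hmin⟩ := Int.exists_least_of_bdd ⟨_, bdd⟩ ⟨_, nonempty⟩
  exact ⟨s, window_mem_deltaSet hf hmono (le_of_not_ge fun h => by linarith [hmin _ h]) hs⟩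

end Window

section OrbitSeq

variable {n : ℕ} [NeZero n] (x : EuclideanSpace ℝ (Fin n))

noncomputable def orbitSeq (m : ℤ) : ℝ :=
  x ⟨(m % n).toNat, by
    have hn : (0 : ℤ) < n := Nat.cast_pos.mpr (NeZero.pos n)
    have := Int.emod_lt_of_pos m hn
    have := Int.emod_nonneg m hn.ne'
    omega⟩ + ((m / n : ℤ) : ℝ)

lemma orbitSeq_add_mul (i : Fin n) (q : ℤ) : orbitSeq x (i + n * q) = x i + q := by
  have hi : ((i : ℕ) : ℤ) < n := by exact_mod_cast i.isLt
  have hdiv := Int.add_mul_ediv_left (i : ℤ) q (Nat.cast_pos.mpr (NeZero.pos n)).ne'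
  rw [Int.ediv_eq_zero_of_lt (by positivity) hi, zero_add] at hdiv
  simp only [orbitSeq, Int.add_mul_emod_self_left, Int.emod_eq_of_lt (by positivity) hi, hdiv,
    Int.toNat_natCast]

lemma exists_eq_add_mul (m : ℤ) : ∃ (i : Fin n) (q : ℤ), m = i + n * q := by
  have hn : (0 : ℤ) < n := Nat.cast_pos.mpr (NeZero.pos n)
  have := Int.emod_lt_of_pos m hn
  have := Int.emod_nonneg m hn.ne'
  refine ⟨⟨(m % n).toNat, by omega⟩, m / n, ?_⟩
  have := Int.emod_add_mul_ediv m n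
  rw [Fin.val_mk]
  omega

lemma window_orbitSeq : window n (orbitSeq x) 0 = x := by
  ext i
  simpa using orbitSeq_add_mul x i 0

lemma orbitSeq_add_period (m : ℤ) : orbitSeq x (m + n) = orbitSeq x m + 1 := by
  obtain ⟨i, q, rfl⟩ := exists_eq_add_mul (n := n) m
  rw [add_assoc, ← mul_add_one, orbitSeq_add_mul, orbitSeq_add_mul]
  push_cast
  ring

lemma monotone_orbitSeq (hx : x ∈ ColumnSet n) : Monotone (orbitSeq x) := by
  intro m m' hm
  obtain ⟨i, q, rfl⟩ := exists_eq_add_mul (n := n) m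
  obtain ⟨i', q', rfl⟩ := exists_eq_add_mul (n := n) m'
  have hi : ((i : ℕ) : ℤ) < n := by exact_mod_cast i.isLt
  have hi' : ((i' : ℕ) : ℤ) < n := by exact_mod_cast i'.isLt
  rw [orbitSeq_add_mul, orbitSeq_add_mul]
  rcases lt_trichotomy q q' with hq | rfl | hq
  · have : (q : ℝ) + 1 ≤ q' := by exact_mod_cast hq
    linarith [hx.2 i i']
  · exact add_le_add_left (hx.1 i i' (by simp only [Fin.le_def]; omega)) _
  · nlinarith

end OrbitSeq

section Tmap

variable {n : ℕ} [NeZero n]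

lemma tinv_tmap (x : EuclideanSpace ℝ (Fin n)) : Tinv n (Tmap n x) = x := by
  rw [← window_orbitSeq x, tmap_window (orbitSeq_add_period x),
    tinv_window (orbitSeq_add_period x), add_sub_cancel_right]

lemma tmap_tinv (x : EuclideanSpace ℝ (Fin n)) : Tmap n (Tinv n x) = x := by
  rw [← window_orbitSeq x, tinv_window (orbitSeq_add_period x),
    tmap_window (orbitSeq_add_period x), sub_add_cancel]

lemma isometry_tmap : Isometry (Tmap n) := by
  refine Isometry.of_dist_eq fun x y => ?_
  rw [← window_orbitSeq x, ← window_orbitSeq y, tmap_window (orbitSeq_add_period x),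
    tmap_window (orbitSeq_add_period y),
    dist_window_succ (orbitSeq_add_period x) (orbitSeq_add_period y)]

lemma tmap_mem_columnSet {x : EuclideanSpace ℝ (Fin n)} (hx : x ∈ ColumnSet n) :
    Tmap n x ∈ ColumnSet n := by
  rw [← window_orbitSeq x, tmap_window (orbitSeq_add_period x)]
  exact window_mem_columnSet (orbitSeq_add_period x) (monotone_orbitSeq x hx) _

lemma tinv_mem_columnSet {x : EuclideanSpace ℝ (Fin n)} (hx : x ∈ ColumnSet n) :
    Tinv n x ∈ ColumnSet n := by
  rw [← window_orbitSeq x, tinv_window (orbitSeq_add_period x)]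
  exact window_mem_columnSet (orbitSeq_add_period x) (monotone_orbitSeq x hx) _

end Tmap

/-- (1) `T` is a surjective isometry of Euclidean `n`-space; (2) `T(C) = C`;
(3) the cyclic group generated by `T` acts freely; and (4) every point of the column `C`
can be moved into the orthoscheme `Δ` by a power of `T`. -/
theorem stmt16 (n : ℕ) (hn : 1 ≤ n) :
    -- (1) `T` is a surjective isometry (hence a bijection, with inverse `Tinv`)
    (Isometry (Tmap n) ∧ Function.Surjective (Tmap n) ∧
      (∀ x, Tinv n (Tmap n x) = x ∧ Tmap n (Tinv n x) = x)) ∧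
    -- (2) `T(C) = C`
    Tmap n '' ColumnSet n = ColumnSet n ∧
    -- (3) the cyclic group `⟨T⟩` acts freely: `T^k(x) = x` implies `k = 0`
    ((∀ (k : ℕ) (x), (Tmap n)^[k] x = x → k = 0) ∧
      (∀ (k : ℕ) (x), (Tinv n)^[k] x = x → k = 0)) ∧
    -- (4) every `x ∈ C` satisfies `T^k(x) ∈ Δ` for some `k ∈ ℤ`
    (∀ x ∈ ColumnSet n, ∃ k : ℕ,
      (Tmap n)^[k] x ∈ DeltaSet n ∨ (Tinv n)^[k] x ∈ DeltaSet n) := by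
  have : NeZero n := ⟨by omega⟩
  refine ⟨⟨isometry_tmap, fun y => ⟨Tinv n y, tmap_tinv y⟩, fun x => ⟨tinv_tmap x, tmap_tinv x⟩⟩,
    ?_, ⟨fun k x hk => ?_, fun k x hk => ?_⟩, fun x hx => ?_⟩
  · refine subset_antisymm (Set.image_subset_iff.mpr fun x hx => tmap_mem_columnSet hx)
      fun y hy => ⟨Tinv n y, tinv_mem_columnSet hy, tmap_tinv y⟩
  · rw [← window_orbitSeq x, tmap_iterate_window (orbitSeq_add_period x)] at hk
    simpa using window_injective (orbitSeq_add_period x) hk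
  · rw [← window_orbitSeq x, tinv_iterate_window (orbitSeq_add_period x)] at hk
    simpa using window_injective (orbitSeq_add_period x) hk
  · obtain ⟨s, hs⟩ := exists_window_mem_deltaSet (orbitSeq_add_period x) (monotone_orbitSeq x hx)
    obtain ⟨k, rfl | rfl⟩ := Int.eq_nat_or_neg s
    · refine ⟨k, Or.inl ?_⟩
      rwa [← window_orbitSeq x, tmap_iterate_window (orbitSeq_add_period x), zero_add]
    · refine ⟨k, Or.inr ?_⟩
      rwa [← window_orbitSeq x, tinv_iterate_window (orbitSeq_add_period x), zero_sub]
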